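/- arXiv:2403.15581 — 2 statements merged into one kernel-verified Lean document; each statement's English description precedes it below -/
import Mathlib

section
/- For the first integral I(u,v) = (1/2)(k u^2 + sqrt(k^2 u^4 + 4 v^2)) with k > 0, each level set {(u,v) : I(u,v) = I_0} with I_0 = k u_0^2 > 0 is exactly the ellipse {(u,v) : v^2 + k I_0 u^2 = I_0^2}. -/
/-- The level set `I(u,v) = I₀` of the first integral
`I(u,v) = (1/2)(k u² + √(k²u⁴ + 4v²))` with `I₀ = k u₀² > 0`
is exactly the ellipse `v² + k I₀ u² = I₀²`. -/
theorem stmt_0 (k u₀ : ℝ) (hk : 0 < k) (hu₀ : u₀ ≠ 0)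
    (I : ℝ × ℝ → ℝ)
    (hI : ∀ u v : ℝ, I (u, v) = (1/2) * (k * u^2 + Real.sqrt (k^2 * u^4 + 4 * v^2)))
    (I₀ : ℝ) (hI₀ : I₀ = k * u₀^2) :
    {p : ℝ × ℝ | I p = I₀} = {p : ℝ × ℝ | p.2^2 + k * I₀ * p.1^2 = I₀^2} := by
  have hI₀pos : 0 < I₀ := by
    rw [hI₀]; positivity
  ext ⟨u, v⟩
  simp only [Set.mem_setOf_eq, hI u v]
  have hnn : (0:ℝ) ≤ k^2 * u^4 + 4 * v^2 := by positivity
  constructor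
  · intro h
    have hs : Real.sqrt (k^2 * u^4 + 4 * v^2) = 2 * I₀ - k * u^2 := by linarith
    have hsq : k^2 * u^4 + 4 * v^2 = (2 * I₀ - k * u^2)^2 := by
      rw [← hs, Real.sq_sqrt hnn]
    nlinarith [hsq]
  · intro h
    have hku : k * u^2 ≤ 2 * I₀ := by nlinarith [sq_nonneg v, sq_nonneg u]
    have hs : Real.sqrt (k^2 * u^4 + 4 * v^2) = 2 * I₀ - k * u^2 := by
      rw [show k^2 * u^4 + 4 * v^2 = (2 * I₀ - k * u^2)^2 by nlinarith]
      exact Real.sqrt_sq (by linarith)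
    rw [hs]; ring
end

section
/- The function I(u,v) = (1/2)(k u^2 + sqrt(k^2 u^4 + 4 v^2)) is a first integral of the planar ODE system u' = v, v' = -f(u,v), where f(u,v) = (k/2) u (k u^2 + sqrt(k^2 u^4 + 4 v^2)); that is, along any solution (u(x), v(x)) of the system with (u,v) ≠ (0,0), the derivative d/dx I(u(x), v(x)) = 0. -/
/-!
Writing `s = √(k²u⁴ + 4v²)`, the chain rule gives
`d/dx (k u² + s)/2 = k u u' + (k² u³ u' + 2 v v') / s`, and substituting `u' = v`,
`v' = -(k/2) u (k u² + s)` the second term becomes `-k u v`, cancelling the first.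
-/

lemma quartic_form_pos {k : ℝ} (hk : k ≠ 0) {a b : ℝ} (hab : (a, b) ≠ (0, 0)) :
    0 < k ^ 2 * a ^ 4 + 4 * b ^ 2 := by
  rcases eq_or_ne a 0 with rfl | _
  · have hb : b ≠ 0 := fun hb => hab (by rw [hb])
    positivity
  · positivity

lemma hasDerivAt_half_add_sqrt_quartic_form {k : ℝ} {u v : ℝ → ℝ} {u' v' x : ℝ}
    (hu : HasDerivAt u u' x) (hv : HasDerivAt v v' x)
    (hpos : 0 < k ^ 2 * u x ^ 4 + 4 * v x ^ 2) :
    HasDerivAt (fun y => (1 / 2) * (k * u y ^ 2 + √(k ^ 2 * u y ^ 4 + 4 * v y ^ 2)))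
      (k * u x * u' + (k ^ 2 * u x ^ 3 * u' + 2 * v x * v') / √(k ^ 2 * u x ^ 4 + 4 * v x ^ 2))
      x := by
  have hform := ((hu.fun_pow 4).const_mul (k ^ 2)).fun_add ((hv.fun_pow 2).const_mul 4)
  have hsum := ((hu.fun_pow 2).const_mul k).fun_add (hform.sqrt hpos.ne')
  refine (hsum.const_mul (1 / 2)).congr_deriv ?_
  have hs : √(k ^ 2 * u x ^ 4 + 4 * v x ^ 2) ≠ 0 := (Real.sqrt_pos.mpr hpos).ne'
  push_cast
  field_simp
  ring

lemma derivative_along_flow_eq_zero (k a b s : ℝ) (hs : s ≠ 0) :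
    k * a * b + (k ^ 2 * a ^ 3 * b + 2 * b * -((k / 2) * a * (k * a ^ 2 + s))) / s = 0 := by
  field_simp
  ring

/-- `I(u,v) = (1/2)(k u² + √(k²u⁴ + 4v²))` is a first integral of the system
`u' = v`, `v' = -f(u,v)` with `f(u,v) = (k/2) u (k u² + √(k²u⁴ + 4v²))`:
along any solution avoiding the origin, `d/dx I(u(x),v(x)) = 0`. -/
theorem stmt_1 (k : ℝ) (hk : 0 < k)
    (f I : ℝ → ℝ → ℝ)
    (hf : ∀ u v : ℝ, f u v = (k/2) * u * (k * u^2 + Real.sqrt (k^2 * u^4 + 4 * v^2)))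
    (hI : ∀ u v : ℝ, I u v = (1/2) * (k * u^2 + Real.sqrt (k^2 * u^4 + 4 * v^2)))
    (u v : ℝ → ℝ)
    (hu : ∀ x, HasDerivAt u (v x) x)
    (hv : ∀ x, HasDerivAt v (-(f (u x) (v x))) x)
    (hne : ∀ x, (u x, v x) ≠ (0, 0)) :
    ∀ x, HasDerivAt (fun x => I (u x) (v x)) 0 x := by
  intro x
  have hpos := quartic_form_pos hk.ne' (hne x)
  have hderiv := hasDerivAt_half_add_sqrt_quartic_form (hu x) (hv x) hpos
  rw [hf, derivative_along_flow_eq_zero _ _ _ _ (Real.sqrt_pos.mpr hpos).ne'] at hderiv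
  simpa only [hI] using hderiv
end
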